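/- arXiv:1704.06152 — 4 statements merged into one kernel-verified Lean document; each statement's English description precedes it below -/
import Mathlib

section
/- Let A be a pseudocompact k-algebra and V a pseudocompact A-module. Then the submodule of V abstractly generated by any finite subset of V is closed in V. -/
/-! Throughout, `k` is a perfect field regarded as a discrete topological ring.

A *pseudocompact* `k`-algebra is an associative unital Hausdorff topological `k`-algebra
which has a basis of neighbourhoods of `0` consisting of open two-sided ideals of finite
codimension intersecting in `0`, and which is the inverse limit of its quotients by these
ideals; equivalently (as encoded below) it is a complete Hausdorff topological algebra with
such a basis of open ideals. -/

/-- The Jacobson radical of a topological algebra: the intersection of the open maximal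
left ideals. -/
def openJacobson (A : Type) [Ring A] [TopologicalSpace A] : Ideal A :=
  sInf {I : Ideal A | IsOpen (I : Set A) ∧ I.IsMaximal}

/-- The Jacobson radical `J(A)`, viewed as a `k`-submodule of `A`. -/
def Jrad (k : Type) [Field k] (A : Type) [Ring A] [Algebra k A] [TopologicalSpace A] :
    Submodule k A := (openJacobson A).restrictScalars k

/-- Powers of the radical: `J⁰(A) = A`, `J¹(A) = J(A)`, `Jⁿ(A) = J(A)·Jⁿ⁻¹(A)` for `n > 1`
(the product of two `k`-submodules being spanned by the products of their elements). -/
def Jpow (k : Type) [Field k] (A : Type) [Ring A] [Algebra k A] [TopologicalSpace A] :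
    ℕ → Submodule k A
  | 0 => ⊤
  | 1 => Jrad k A
  | n + 2 => Jrad k A * Jpow k A (n + 1)

/-- `A` is a pseudocompact `k`-algebra: Hausdorff, complete, with a basis of neighbourhoods
of `0` consisting of open two-sided ideals of finite codimension over `k`.  (Hausdorffness is
equivalent to the requirement that these open ideals intersect in `0`, and completeness to
`A` being the inverse limit of its quotients by them.) -/
structure IsPseudocompactAlgebra (k : Type) [Field k] (A : Type) [Ring A] [Algebra k A]
    [UniformSpace A] [IsUniformAddGroup A] [IsTopologicalRing A] : Prop where
  t2 : T2Space A
  complete : CompleteSpace A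
  basis : ∀ s ∈ nhds (0 : A), ∃ I : Ideal A,
    (∀ x ∈ I, ∀ b : A, x * b ∈ I) ∧ IsOpen (I : Set A) ∧
    FiniteDimensional k (A ⧸ I.restrictScalars k) ∧ (I : Set A) ⊆ s

/-- `V` is a pseudocompact `A`-module: Hausdorff, complete, with a basis of neighbourhoods
of `0` consisting of open submodules of finite codimension over `k`. -/
structure IsPseudocompactModule (k : Type) [Field k] (A : Type) [Ring A] [Algebra k A]
    (V : Type) [AddCommGroup V] [Module k V] [Module A V] [IsScalarTower k A V]
    [UniformSpace V] [IsUniformAddGroup V] : Prop where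
  t2 : T2Space V
  complete : CompleteSpace V
  basis : ∀ s ∈ nhds (0 : V), ∃ p : Submodule A V,
    IsOpen (p : Set V) ∧ FiniteDimensional k (V ⧸ p.restrictScalars k) ∧ (p : Set V) ⊆ s

/-- A pseudocompact algebra `A` is *pointed* if `A/J(A)` is isomorphic to a finite product of
copies of `k`; equivalently, there is a surjective `k`-algebra homomorphism `A → kⁿ`
whose kernel is `J(A)`. -/
def IsPointed (k : Type) [Field k] (A : Type) [Ring A] [Algebra k A] [TopologicalSpace A] :
    Prop :=
  ∃ (n : ℕ) (φ : A →ₐ[k] (Fin n → k)), Function.Surjective φ ∧ RingHom.ker φ = openJacobson A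

/-! The submodule generated by `S` is the image of the continuous map `f : A^S → V`,
`a ↦ ∑ aₛ • s`, and `A^S` is *linearly compact*: a directed family of nonempty closed affine
subspaces has nonempty intersection. For that, Zorn's lemma gives a minimal filter `ℱ` generated by
closed affine subspaces and refining the family. Modulo an open subspace `U` of finite codimension
the images of the members of `ℱ` stabilise by a dimension count, so by minimality `ℱ` contains a
coset of `U`; hence `ℱ` is Cauchy, and its limit lies in every member of the family. For `v` in
the closure of the image of `f`, the sets `f⁻¹(v + p)`, `p` an open subspace of `V`, form such a
family, and a point in their intersection is a preimage of `v`. -/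

open Filter Topology Module

section LinearCompactness

variable {k : Type*} [DivisionRing k] {M : Type*} [AddCommGroup M] [Module k M]

def HasFiniteCodimOpenBasis (k M : Type*) [DivisionRing k] [AddCommGroup M] [Module k M]
    [TopologicalSpace M] : Prop :=
  ∀ s ∈ 𝓝 (0 : M), ∃ U : Submodule k M,
    IsOpen (U : Set M) ∧ FiniteDimensional k (M ⧸ U) ∧ (U : Set M) ⊆ s

structure IsClosedAffineFilter (k : Type*) {M : Type*} [Ring k] [AddCommGroup M] [Module k M]
    [TopologicalSpace M] (ℱ : Filter M) : Prop where
  neBot : ℱ.NeBot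
  exists_subset : ∀ s ∈ ℱ,
    ∃ t : AffineSubspace k M, IsClosed (t : Set M) ∧ (t : Set M) ∈ ℱ ∧ (t : Set M) ⊆ s

theorem AffineSubspace.coe_mk'_eq_preimage_sub (c : M) (U : Submodule k M) :
    (AffineSubspace.mk' c U : Set M) = (· - c) ⁻¹' U := by
  ext x
  simp [AffineSubspace.mem_mk']

theorem exists_forall_mem_exists_map_eq {W : Type*} [AddCommGroup W] [Module k W]
    [FiniteDimensional k W] (π : M →ₗ[k] W) {ℱ : Filter M} [ℱ.NeBot]
    (h : ∀ s ∈ ℱ, ∃ t : AffineSubspace k M, (t : Set M) ∈ ℱ ∧ (t : Set M) ⊆ s) :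
    ∃ c, ∀ s ∈ ℱ, ∃ y ∈ s, π y = π c := by
  -- Take `t₀ ∈ ℱ` whose direction has an image under `π` of least dimension: shrinking `t₀`
  -- inside `ℱ` cannot shrink that image, so every member of `ℱ` meets the fibre of `π` at `c₀`.
  obtain ⟨t₀, ht₀, hmin⟩ :=
    (measure fun t : AffineSubspace k M => finrank k (t.direction.map π)).wf.has_min
      {t | (t : Set M) ∈ ℱ} ⟨⊤, univ_mem⟩
  obtain ⟨c₀, hc₀⟩ := nonempty_of_mem ht₀
  refine ⟨c₀, fun s hs => ?_⟩
  obtain ⟨t, ht, hts⟩ := h s hs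
  have hinter : ((t ⊓ t₀ : AffineSubspace k M) : Set M) ∈ ℱ := inter_mem ht ht₀
  obtain ⟨c, hc⟩ := nonempty_of_mem hinter
  have hdir : (t ⊓ t₀).direction.map π = t₀.direction.map π :=
    Submodule.eq_of_le_of_finrank_le
      (Submodule.map_mono (AffineSubspace.direction_le inf_le_right))
      (not_lt.1 (hmin _ hinter))
  obtain ⟨d, hd, hπd⟩ : π (c₀ - c) ∈ (t ⊓ t₀).direction.map π :=
    hdir ▸ Submodule.mem_map_of_mem (AffineSubspace.vsub_mem_direction hc₀ hc.2)
  refine ⟨d + c, hts (AffineSubspace.vadd_mem_of_mem_direction hd hc).1, ?_⟩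
  rw [map_add, hπd, map_sub, sub_add_cancel]

section Topological

variable [TopologicalSpace M]

theorem IsClosedAffineFilter.iInf {ι : Type*} [Nonempty ι] {ℱ : ι → Filter M}
    (hdir : Directed (· ≥ ·) ℱ) (h : ∀ i, IsClosedAffineFilter k (ℱ i)) :
    IsClosedAffineFilter k (⨅ i, ℱ i) where
  neBot := iInf_neBot_of_directed' hdir fun i => (h i).neBot
  exists_subset s hs := by
    obtain ⟨i, hi⟩ := (mem_iInf_of_directed hdir s).1 hs
    obtain ⟨t, htc, hti, hts⟩ := (h i).exists_subset s hi
    exact ⟨t, htc, mem_iInf_of_mem i hti, hts⟩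

theorem isClosedAffineFilter_principal {t : AffineSubspace k M} (hne : (t : Set M).Nonempty)
    (hcl : IsClosed (t : Set M)) : IsClosedAffineFilter k (𝓟 (t : Set M)) where
  neBot := principal_neBot_iff.2 hne
  exists_subset _ hs := ⟨t, hcl, mem_principal_self _, hs⟩

theorem IsClosedAffineFilter.exists_minimal_le {ℱ₀ : Filter M} (h₀ : IsClosedAffineFilter k ℱ₀) :
    ∃ ℱ ≤ ℱ₀, Minimal (IsClosedAffineFilter k) ℱ := by
  obtain ⟨ℱ, hle, hmax⟩ := zorn_le_nonempty₀ (α := (Filter M)ᵒᵈ)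
    {𝒢 | IsClosedAffineFilter k (OrderDual.ofDual 𝒢)}
    (fun c hc hchain 𝒢 h𝒢 => by
      have : Nonempty c := ⟨⟨𝒢, h𝒢⟩⟩
      have hdir : Directed (· ≥ ·) fun 𝒢 : c => OrderDual.ofDual 𝒢.1 :=
        hchain.directedOn.directed_val
      exact ⟨OrderDual.toDual (⨅ 𝒢 : c, OrderDual.ofDual 𝒢.1),
        IsClosedAffineFilter.iInf hdir fun 𝒢 => hc 𝒢.2,
        fun 𝒢 h𝒢 => iInf_le (fun 𝒢 : c => OrderDual.ofDual 𝒢.1) ⟨𝒢, h𝒢⟩⟩)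
    (OrderDual.toDual ℱ₀) h₀
  exact ⟨OrderDual.ofDual ℱ, hle, hmax.of_dual⟩

variable [IsTopologicalAddGroup M]

theorem AffineSubspace.isOpen_mk' {U : Submodule k M} (hU : IsOpen (U : Set M)) (c : M) :
    IsOpen (AffineSubspace.mk' c U : Set M) := by
  rw [coe_mk'_eq_preimage_sub]
  exact hU.preimage (continuous_sub_right c)

theorem AffineSubspace.isClosed_mk' {U : Submodule k M} (hU : IsClosed (U : Set M)) (c : M) :
    IsClosed (AffineSubspace.mk' c U : Set M) := by
  rw [coe_mk'_eq_preimage_sub]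
  exact hU.preimage (continuous_sub_right c)

theorem Minimal.exists_mk'_mem_of_isClosedAffineFilter {ℱ : Filter M}
    (hℱ : Minimal (IsClosedAffineFilter k) ℱ) {U : Submodule k M} (hU : IsOpen (U : Set M))
    [FiniteDimensional k (M ⧸ U)] :
    ∃ c, ((AffineSubspace.mk' c U : AffineSubspace k M) : Set M) ∈ ℱ := by
  obtain ⟨⟨_, hbasis⟩, hmin⟩ := hℱ
  obtain ⟨c, hc⟩ := exists_forall_mem_exists_map_eq U.mkQ
    fun s hs => (hbasis s hs).imp fun t ht => ht.2
  set W := AffineSubspace.mk' c U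
  have hW : ∀ x, x ∈ W ↔ U.mkQ x = U.mkQ c := fun x => by
    rw [AffineSubspace.mem_mk', Submodule.mkQ_apply, Submodule.mkQ_apply,
      Submodule.Quotient.eq, vsub_eq_sub]
  have hW𝓕 : IsClosedAffineFilter k (ℱ ⊓ 𝓟 (W : Set M)) := by
    refine ⟨inf_principal_neBot_iff.2 fun s hs => ?_, fun s hs => ?_⟩
    · obtain ⟨y, hys, hy⟩ := hc s hs
      exact ⟨y, hys, (hW y).2 hy⟩
    obtain ⟨s₁, hs₁, s₂, hs₂, rfl⟩ := mem_inf_iff.1 hs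
    obtain ⟨t, htc, ht, hts⟩ := hbasis s₁ hs₁
    refine ⟨t ⊓ W, ?_, ?_, ?_⟩
    · exact htc.inter (AffineSubspace.isClosed_mk' (U.toAddSubgroup.isClosed_of_isOpen hU) c)
    · exact inter_mem_inf ht (mem_principal_self _)
    · exact Set.inter_subset_inter hts hs₂
  exact ⟨c, hmin hW𝓕 inf_le_left (mem_inf_of_right (mem_principal_self _))⟩

end Topological

section Uniform

variable [UniformSpace M] [IsUniformAddGroup M]

theorem Minimal.cauchy_of_isClosedAffineFilter (hM : HasFiniteCodimOpenBasis k M)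
    {ℱ : Filter M} (hℱ : Minimal (IsClosedAffineFilter k) ℱ) : Cauchy ℱ := by
  refine ⟨hℱ.prop.neBot, ?_⟩
  rw [uniformity_eq_comap_nhds_zero M, ← map_le_iff_le_comap]
  intro s hs
  obtain ⟨U, hUo, hUfd, hUs⟩ := hM s hs
  obtain ⟨c, hc⟩ := hℱ.exists_mk'_mem_of_isClosedAffineFilter hUo
  refine mem_map.2 (mem_of_superset (prod_mem_prod hc hc) ?_)
  rintro ⟨x, y⟩ ⟨hx, hy⟩
  apply hUs
  simpa using sub_mem (AffineSubspace.mem_mk'.1 hy) (AffineSubspace.mem_mk'.1 hx)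

theorem AffineSubspace.nonempty_iInter_of_directed [CompleteSpace M]
    (hM : HasFiniteCodimOpenBasis k M) {ι : Type*} [Nonempty ι] {F : ι → AffineSubspace k M}
    (hdir : Directed (· ≥ ·) F) (hne : ∀ i, (F i : Set M).Nonempty)
    (hcl : ∀ i, IsClosed (F i : Set M)) : (⋂ i, (F i : Set M)).Nonempty := by
  have hdir' : Directed (· ≥ ·) fun i => 𝓟 (F i : Set M) :=
    hdir.mono_comp (rb := (· ≥ ·)) _ fun _ _ h => principal_mono.2 h
  obtain ⟨ℱ, hle, hmin⟩ := (IsClosedAffineFilter.iInf hdir' fun i =>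
    isClosedAffineFilter_principal (hne i) (hcl i)).exists_minimal_le
  have := hmin.prop.neBot
  obtain ⟨x, hx⟩ := CompleteSpace.complete (hmin.cauchy_of_isClosedAffineFilter hM)
  exact ⟨x, Set.mem_iInter.2 fun i => (hcl i).mem_of_tendsto hx
    (hle (mem_iInf_of_mem i (mem_principal_self _)))⟩

end Uniform

end LinearCompactness

theorem LinearMap.isClosed_range_of_hasFiniteCodimOpenBasis {k M V : Type*} [DivisionRing k]
    [AddCommGroup M] [Module k M] [UniformSpace M] [IsUniformAddGroup M] [CompleteSpace M]
    (hM : HasFiniteCodimOpenBasis k M) [AddCommGroup V] [Module k V] [TopologicalSpace V]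
    [IsTopologicalAddGroup V]
    (hV : ∀ v : V, v ≠ 0 → ∃ p : Submodule k V, IsOpen (p : Set V) ∧ v ∉ p)
    (f : M →ₗ[k] V) (hf : Continuous f) : IsClosed (Set.range f) := by
  refine isClosed_of_closure_subset fun v hv => ?_
  let F : {p : Submodule k V // IsOpen (p : Set V)} → AffineSubspace k M :=
    fun p => (AffineSubspace.mk' v p.1).comap f.toAffineMap
  have : Nonempty {p : Submodule k V // IsOpen (p : Set V)} := ⟨⟨⊤, isOpen_univ⟩⟩
  have hdir : Directed (· ≥ ·) F := fun p q =>
    ⟨⟨p.1 ⊓ q.1, p.2.inter q.2⟩,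
      AffineSubspace.comap_mono ((AffineSubspace.mk'_le_mk'_iff v).2 inf_le_left),
      AffineSubspace.comap_mono ((AffineSubspace.mk'_le_mk'_iff v).2 inf_le_right)⟩
  have hne : ∀ p, (F p : Set M).Nonempty := fun p => by
    obtain ⟨_, hw, x, rfl⟩ := mem_closure_iff_nhds.1 hv _
      ((AffineSubspace.isOpen_mk' p.2 v).mem_nhds (AffineSubspace.self_mem_mk' v _))
    exact ⟨x, hw⟩
  have hcl : ∀ p, IsClosed (F p : Set M) := fun p =>
    (AffineSubspace.isClosed_mk' (p.1.toAddSubgroup.isClosed_of_isOpen p.2) v).preimage hf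
  obtain ⟨x, hx⟩ := AffineSubspace.nonempty_iInter_of_directed hM hdir hne hcl
  refine ⟨x, sub_eq_zero.1 (not_not.1 fun hxv => ?_)⟩
  obtain ⟨p, hp, hxp⟩ := hV _ hxv
  exact hxp (AffineSubspace.mem_mk'.1 (Set.mem_iInter.1 hx ⟨p, hp⟩))

theorem HasFiniteCodimOpenBasis.pi {k ι : Type*} [DivisionRing k] [Fintype ι] {M : ι → Type*}
    [∀ i, AddCommGroup (M i)] [∀ i, Module k (M i)] [∀ i, TopologicalSpace (M i)]
    (h : ∀ i, HasFiniteCodimOpenBasis k (M i)) : HasFiniteCodimOpenBasis k (∀ i, M i) := by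
  classical
  intro s hs
  rw [nhds_pi, Filter.mem_pi] at hs
  obtain ⟨I, -, t, ht, hts⟩ := hs
  choose U hUo hUfd hUt using fun i => h i (t i) (ht i)
  have hcoe : ((Submodule.pi Set.univ U : Submodule k (∀ i, M i)) : Set (∀ i, M i)) =
      Set.univ.pi fun i => (U i : Set (M i)) := by
    ext x
    simp
  refine ⟨Submodule.pi Set.univ U, ?_, ?_, ?_⟩
  · rw [hcoe]
    exact isOpen_set_pi Set.finite_univ fun i _ => hUo i
  · let φ := LinearMap.pi fun i => (U i).mkQ ∘ₗ LinearMap.proj i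
    have hker : LinearMap.ker φ = Submodule.pi Set.univ U := by
      ext x
      simp [φ, Submodule.mem_pi, funext_iff]
    exact hker ▸ φ.quotKerEquivRange.symm.finiteDimensional
  · rw [hcoe]
    exact fun x hx => hts fun i _ => hUt i (hx i (Set.mem_univ i))

theorem IsPseudocompactAlgebra.hasFiniteCodimOpenBasis {k A : Type} [Field k] [Ring A]
    [Algebra k A] [UniformSpace A] [IsUniformAddGroup A] [IsTopologicalRing A]
    (hA : IsPseudocompactAlgebra k A) : HasFiniteCodimOpenBasis k A := fun s hs =>
  let ⟨I, _, hIo, hIfd, hIs⟩ := hA.basis s hs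
  ⟨I.restrictScalars k, hIo, hIfd, hIs⟩

theorem IsPseudocompactModule.exists_isOpen_notMem {k A V : Type} [Field k] [Ring A] [Algebra k A]
    [AddCommGroup V] [Module k V] [Module A V] [IsScalarTower k A V] [UniformSpace V]
    [IsUniformAddGroup V] (hV : IsPseudocompactModule k A V) {v : V} (hv : v ≠ 0) :
    ∃ p : Submodule k V, IsOpen (p : Set V) ∧ v ∉ p := by
  have := hV.t2
  obtain ⟨p, hpo, -, hps⟩ := hV.basis _ (isOpen_compl_singleton.mem_nhds hv.symm)
  exact ⟨p.restrictScalars k, hpo, fun hvp => hps hvp rfl⟩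

theorem span_finset_isClosed_general
    (k : Type) [Field k]
    (A : Type) [Ring A] [Algebra k A] [UniformSpace A] [IsUniformAddGroup A] [IsTopologicalRing A]
    (hA : IsPseudocompactAlgebra k A)
    (V : Type) [AddCommGroup V] [Module k V] [Module A V] [IsScalarTower k A V]
    [UniformSpace V] [IsUniformAddGroup V] [ContinuousSMul A V]
    (hV : IsPseudocompactModule k A V)
    (S : Finset V) :
    IsClosed ((Submodule.span A (S : Set V) : Submodule A V) : Set V) := by
  have := hA.complete
  let f := Fintype.linearCombination A fun v : S => (v : V)
  have hf : Continuous f := by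
    simp only [f]
    fun_prop
  have hrange : Submodule.span A (S : Set V) = LinearMap.range f := by
    rw [Fintype.range_linearCombination, Subtype.range_coe_subtype, Finset.setOfPred_mem]
  rw [hrange, LinearMap.coe_range]
  exact (f.restrictScalars k).isClosed_range_of_hasFiniteCodimOpenBasis
    (HasFiniteCodimOpenBasis.pi fun _ => hA.hasFiniteCodimOpenBasis)
    (fun _ => hV.exists_isOpen_notMem) hf

/-- Let `A` be a pseudocompact `k`-algebra and `V` a pseudocompact
`A`-module.  Then the submodule of `V` abstractly generated by any finite subset of `V`
is closed in `V`. -/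
theorem span_finset_isClosed
    (k : Type) [Field k] [PerfectField k]
    (A : Type) [Ring A] [Algebra k A] [UniformSpace A] [IsUniformAddGroup A] [IsTopologicalRing A]
    (hA : IsPseudocompactAlgebra k A)
    (V : Type) [AddCommGroup V] [Module k V] [Module A V] [IsScalarTower k A V]
    [UniformSpace V] [IsUniformAddGroup V] [ContinuousSMul A V]
    (hV : IsPseudocompactModule k A V)
    (S : Finset V) :
    IsClosed ((Submodule.span A (S : Set V) : Submodule A V) : Set V) :=
  span_finset_isClosed_general k A hA V hV S
end

section
/- Let A be a pseudocompact k-algebra such that A/J²(A) is finite dimensional over k. Then the Jacobson radical J(A) is finitely generated as an A-module. -/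
/-! For an open two-sided ideal `I` of finite codimension, `A ⧸ I` is a finite-dimensional, hence
Artinian, algebra; its Jacobson radical is nilpotent and contains the image of `J(A)`, so some
`Jⁿ(A)` lies in `I`, i.e. the powers of `J(A)` tend to `0`. Lift a finite spanning set of
`J/J²` to `x₁, …, x_r ∈ J`; then `Jᵐ⁺¹ ⊆ ∑ Jᵐ xᵢ + Jᵐ⁺²` for all `m`, and correcting an element of
`J` step by step produces coefficient series that converge by completeness, exhibiting it as
`∑ aᵢ xᵢ`. -/

open Filter Topology

theorem summable_of_mem_antitone {X : Type*} [AddCommGroup X] [UniformSpace X]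
    [IsUniformAddGroup X] [CompleteSpace X] {G : ℕ → AddSubgroup X} (hG : Antitone G)
    (hG0 : Tendsto (fun n => (G n : Set X)) atTop (𝓝 0).smallSets) {c : ℕ → X}
    (hc : ∀ n, c n ∈ G n) : Summable c := by
  refine summable_iff_vanishing.mpr fun e he => ?_
  obtain ⟨N, hN⟩ := (tendsto_smallSets_iff.mp hG0 e he).exists_forall_of_atTop
  refine ⟨Finset.range N, fun t ht => hN N le_rfl (AddSubgroup.sum_mem _ fun j hj => ?_)⟩
  have hNj : N ≤ j := by simpa using Finset.disjoint_left.mp ht hj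
  exact hG hNj (hc j)

theorem Filter.Tendsto.pi_univ_smallSets {α ι X : Type*} [TopologicalSpace X] {l : Filter α}
    {S : α → Set X} {x : X} (hne : ∀ a, (S a).Nonempty) (h : Tendsto S l (𝓝 x).smallSets) :
    Tendsto (fun a => Set.univ.pi fun _ : ι => S a) l (𝓝 fun _ : ι => x).smallSets := by
  simp only [nhds_pi, Filter.pi, smallSets_iInf, smallSets_comap_eq_comap_image, tendsto_iInf,
    tendsto_comap_iff]
  intro i
  convert h using 1
  funext a
  exact Set.eval_image_univ_pi (Set.univ_pi_nonempty_iff.mpr fun _ => hne a)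

theorem le_range_of_le_map_sup {R X Y : Type*} [Ring R]
    [AddCommGroup X] [Module R X] [UniformSpace X] [IsUniformAddGroup X] [CompleteSpace X]
    [AddCommGroup Y] [Module R Y] [TopologicalSpace Y] [IsTopologicalAddGroup Y] [T2Space Y]
    (Φ : X →ₗ[R] Y) (hΦ : Continuous Φ) {F : ℕ → Submodule R Y} {G : ℕ → Submodule R X}
    (hF0 : Tendsto (fun n => (F n : Set Y)) atTop (𝓝 0).smallSets)
    (hG : Antitone G) (hG0 : Tendsto (fun n => (G n : Set X)) atTop (𝓝 0).smallSets)
    (hstep : ∀ n, F n ≤ (G n).map Φ ⊔ F (n + 1)) : F 0 ≤ LinearMap.range Φ := by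
  intro y hy
  have hcorr : ∀ n, ∀ z ∈ F n, ∃ g ∈ G n, z - Φ g ∈ F (n + 1) := fun n z hz => by
    obtain ⟨-, ⟨g, hg, rfl⟩, r, hr, rfl⟩ := Submodule.mem_sup.mp (hstep n hz)
    exact ⟨g, hg, by simpa using hr⟩
  choose g hg hrem using hcorr
  -- `r n` is the remainder of `y` after the corrections `c 0, …, c (n - 1)`
  let r : ∀ n, F n := fun n => Nat.rec ⟨y, hy⟩ (fun n z => ⟨z - Φ (g n z z.2), hrem n z z.2⟩) n
  let c : ℕ → X := fun n => g n (r n).1 (r n).2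
  have hsum : ∀ n, Φ (∑ i ∈ Finset.range n, c i) = y - (r n).1 := fun n => by
    induction n with
    | zero => simp [r]
    | succ n ih =>
      rw [Finset.sum_range_succ, map_add, ih]
      change _ = y - ((r n).1 - Φ (c n))
      abel
  obtain ⟨b, hb⟩ := summable_of_mem_antitone (G := fun n => (G n).toAddSubgroup)
    (fun _ _ h => hG h) hG0 fun n => hg n (r n).1 (r n).2
  have hr0 : Tendsto (fun n => (r n).1) atTop (𝓝 0) :=
    hF0.of_smallSets (.of_forall fun n => SetLike.mem_coe.mpr (r n).2)
  have hlim : Tendsto (fun n => Φ (∑ i ∈ Finset.range n, c i)) atTop (𝓝 y) := by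
    simpa [hsum] using tendsto_const_nhds.sub hr0
  exact ⟨b, tendsto_nhds_unique ((hΦ.tendsto b).comp hb.tendsto_sum_nat) hlim⟩

theorem exists_fin_le_span_sup_ker {R M N : Type*} [Ring R] [AddCommGroup M] [Module R M]
    [AddCommGroup N] [Module R N] (f : M →ₗ[R] N) {p : Submodule R M} (hp : (p.map f).FG) :
    ∃ (n : ℕ) (x : Fin n → M),
      (∀ i, x i ∈ p) ∧ p ≤ Submodule.span R (Set.range x) ⊔ LinearMap.ker f := by
  obtain ⟨n, s, hs⟩ := Submodule.fg_iff_exists_fin_generating_family.mp hp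
  have hlift : ∀ i, ∃ y ∈ p, f y = s i := fun i =>
    Submodule.mem_map.mp (hs ▸ Submodule.subset_span ⟨i, rfl⟩)
  choose x hxp hxs using hlift
  refine ⟨n, x, hxp, ?_⟩
  rw [← Submodule.comap_map_eq, Submodule.map_span, ← Set.range_comp,
    show f ∘ x = s from funext hxs, hs]
  exact Submodule.le_comap_map f p

section Radical

variable {A : Type} [Ring A] [TopologicalSpace A]

instance [ContinuousMul A] : (openJacobson A).IsTwoSided := by
  refine ⟨fun {x} b hx => Submodule.mem_sInf.mpr fun m ⟨hm_open, hm_max⟩ => ?_⟩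
  obtain h | h := Submodule.isCoatom_comap_or_eq_top (LinearMap.toSpanSingleton A A b)
    (Ideal.isMaximal_def.mp hm_max)
  · have hopen : IsOpen ((m.comap (LinearMap.toSpanSingleton A A b) : Ideal A) : Set A) :=
      hm_open.preimage (continuous_mul_const b)
    simpa using Submodule.mem_sInf.mp hx _ ⟨hopen, Ideal.isMaximal_def.mpr h⟩
  · have hx' : x ∈ m.comap (LinearMap.toSpanSingleton A A b) := h ▸ Submodule.mem_top
    simpa using hx'

theorem openJacobson_le_comap_jacobson [ContinuousAdd A] (I : Ideal A) [I.IsTwoSided]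
    (hI : IsOpen (I : Set A)) :
    openJacobson A ≤ Ideal.comap (Ideal.Quotient.mk I) (Ring.jacobson (A ⧸ I)) := by
  intro x hx
  rw [Ideal.mem_comap, Ring.jacobson_eq_sInf_isMaximal, Submodule.mem_sInf]
  intro M hM
  have hopen : IsOpen (Ideal.comap (Ideal.Quotient.mk I) M : Set A) :=
    AddSubgroup.isOpen_mono (H₁ := I.toAddSubgroup) (H₂ := (Ideal.comap _ M).toAddSubgroup)
      (fun a ha => show Ideal.Quotient.mk I a ∈ M by
        rw [Ideal.Quotient.eq_zero_iff_mem.mpr ha]; exact M.zero_mem) hI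
  exact Submodule.mem_sInf.mp hx _
    ⟨hopen, Ideal.comap_isMaximal_of_surjective _ Ideal.Quotient.mk_surjective (H := hM)⟩

end Radical

section Jpow

variable {k : Type} [Field k] {A : Type} [Ring A] [Algebra k A] [TopologicalSpace A]

theorem jpow_succ_eq_pow : ∀ n, Jpow k A (n + 1) = Jrad k A ^ (n + 1)
  | 0 => (Submodule.pow_one _).symm
  | n + 1 => by
    rw [Submodule.pow_succ' _ n.succ_ne_zero, ← jpow_succ_eq_pow n]
    rfl

theorem jpow_antitone : Antitone (Jpow k A) := by
  refine antitone_nat_of_succ_le fun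
    | 0 => le_top
    | n + 1 => ?_
  have hJJ : Jrad k A * Jrad k A ≤ Jrad k A :=
    Submodule.mul_le.mpr fun a _ _ hb => (openJacobson A).mul_mem_left a hb
  rw [jpow_succ_eq_pow, jpow_succ_eq_pow, Submodule.pow_succ, Submodule.pow_succ, mul_assoc]
  exact mul_le_mul_right hJJ _

theorem jrad_mul_jpow_le [ContinuousMul A] : ∀ n, Jrad k A * Jpow k A n ≤ Jpow k A (n + 1)
  | 0 => Submodule.mul_le.mpr fun _ ha b _ => (openJacobson A).mul_mem_right b ha
  | _ + 1 => le_rfl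

theorem exists_jpow_le [ContinuousAdd A] (I : Ideal A) [I.IsTwoSided] (hI : IsOpen (I : Set A))
    [FiniteDimensional k (A ⧸ I)] : ∃ n, Jpow k A n ≤ I.restrictScalars k := by
  have : IsArtinianRing (A ⧸ I) := IsArtinianRing.of_finite k (A ⧸ I)
  obtain ⟨n, hn⟩ := IsSemiprimaryRing.isNilpotent (R := A ⧸ I)
  let π := Ideal.Quotient.mkₐ k I
  have hJ : (Jrad k A).map π.toLinearMap ≤ (Ring.jacobson (A ⧸ I)).restrictScalars k :=
    Submodule.map_le_iff_le_comap.mpr (openJacobson_le_comap_jacobson I hI)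
  have hbot : (Jpow k A (n + 1)).map π.toLinearMap = ⊥ := by
    rw [jpow_succ_eq_pow, Submodule.map_pow, ← le_bot_iff]
    calc _ ≤ (Ring.jacobson (A ⧸ I)).restrictScalars k ^ (n + 1) := pow_le_pow_left' hJ _
      _ = (Ring.jacobson (A ⧸ I) ^ (n + 1)).restrictScalars k :=
        (Submodule.restrictScalars_pow n.succ_ne_zero).symm
      _ = ⊥ := by rw [Submodule.pow_succ, hn, Submodule.zero_eq_bot, Submodule.bot_mul]; rfl
  refine ⟨n + 1, fun x hx => ?_⟩
  have hπx : π x = 0 := (Submodule.mem_bot k).mp (hbot ▸ Submodule.mem_map_of_mem hx)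
  exact Ideal.Quotient.eq_zero_iff_mem.mp hπx

end Jpow

theorem IsPseudocompactAlgebra.tendsto_jpow {k : Type} [Field k] {A : Type} [Ring A] [Algebra k A]
    [UniformSpace A] [IsUniformAddGroup A] [IsTopologicalRing A] (hA : IsPseudocompactAlgebra k A) :
    Tendsto (fun n => (Jpow k A n : Set A)) atTop (𝓝 0).smallSets := by
  refine tendsto_smallSets_iff.mpr fun s hs => ?_
  obtain ⟨I, hIr, hIo, hIf, hIs⟩ := hA.basis s hs
  have : I.IsTwoSided := ⟨fun b ha => hIr _ ha b⟩
  have : FiniteDimensional k (A ⧸ I) :=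
    (Submodule.Quotient.restrictScalarsEquiv k I).finiteDimensional
  obtain ⟨n, hn⟩ := exists_jpow_le (k := k) I hIo
  exact eventually_atTop.mpr
    ⟨n, fun m hm => subset_trans (fun x hx => hn (jpow_antitone hm hx)) hIs⟩

section Generators

variable {k : Type} [Field k] {A : Type} [Ring A] [Algebra k A] {ι : Type} [Fintype ι]

theorem mul_map_linearCombination_pi_le {P Q Q' : Submodule k A} (h : P * Q ≤ Q') (x : ι → A) :
    P * (Submodule.pi Set.univ fun _ : ι => Q).map
          ((Fintype.linearCombination A x).restrictScalars k)
      ≤ (Submodule.pi Set.univ fun _ : ι => Q').map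
          ((Fintype.linearCombination A x).restrictScalars k) := by
  refine Submodule.mul_le.mpr fun z hz _ ⟨a, ha, hw⟩ =>
    ⟨z • a, fun i _ => h (Submodule.mul_mem_mul hz (ha i trivial)), ?_⟩
  rw [← hw]
  simp

theorem jpow_succ_le_map_sup [TopologicalSpace A] [ContinuousMul A] (x : ι → A)
    (hx : Jrad k A ≤ Submodule.span k (Set.range x) ⊔ Jpow k A 2) :
    ∀ m, Jpow k A (m + 1) ≤ (Submodule.pi Set.univ fun _ : ι => Jpow k A m).map
      ((Fintype.linearCombination A x).restrictScalars k) ⊔ Jpow k A (m + 2)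
  | 0 => by
    classical
    refine hx.trans <| sup_le_sup_right
      (Submodule.span_le.mpr (Set.range_subset_iff.mpr fun i => ?_)) _
    exact ⟨Pi.single i 1, fun _ _ => Submodule.mem_top, by simp⟩
  | m + 1 => calc
      Jpow k A (m + 2) = Jrad k A * Jpow k A (m + 1) := rfl
      _ ≤ Jrad k A * ((Submodule.pi Set.univ fun _ : ι => Jpow k A m).map
            ((Fintype.linearCombination A x).restrictScalars k) ⊔ Jpow k A (m + 2)) :=
        mul_le_mul_right (jpow_succ_le_map_sup x hx m) _
      _ = _ := Submodule.mul_sup _ _ _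
      _ ≤ _ := sup_le_sup (mul_map_linearCombination_pi_le (jrad_mul_jpow_le m) x) le_rfl

end Generators

theorem openJacobson_fg_general
    (k : Type) [Field k]
    (A : Type) [Ring A] [Algebra k A] [UniformSpace A] [IsUniformAddGroup A] [IsTopologicalRing A]
    (hA : IsPseudocompactAlgebra k A)
    (hfd : FiniteDimensional k (A ⧸ Jpow k A 2)) :
    (openJacobson A).FG := by
  have := hA.t2
  have := hA.complete
  obtain ⟨n, x, hxJ, hx⟩ :=
    exists_fin_le_span_sup_ker (Jpow k A 2).mkQ (p := Jrad k A) (IsNoetherian.noetherian _)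
  rw [Submodule.ker_mkQ] at hx
  let Φ := (Fintype.linearCombination A x).restrictScalars k
  have hΦ : Continuous Φ := by
    rw [show ⇑Φ = fun a => ∑ i, a i * x i from funext (Fintype.linearCombination_apply A x)]
    fun_prop
  let G : ℕ → Submodule k (Fin n → A) := fun m => Submodule.pi Set.univ fun _ => Jpow k A m
  have hG0 : Tendsto (fun m => (G m : Set (Fin n → A))) atTop (𝓝 0).smallSets :=
    hA.tendsto_jpow.pi_univ_smallSets fun _ => ⟨0, zero_mem _⟩
  have hG : Antitone G := fun _ _ h _ hy i hi => jpow_antitone h (hy i hi)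
  have hJ : Jpow k A 1 ≤ LinearMap.range Φ :=
    le_range_of_le_map_sup Φ hΦ (hA.tendsto_jpow.comp (tendsto_add_atTop_nat 1)) hG hG0
      (jpow_succ_le_map_sup x hx)
  rw [LinearMap.range_restrictScalars, Fintype.range_linearCombination] at hJ
  exact Submodule.fg_iff_exists_fin_generating_family.mpr
    ⟨n, x, le_antisymm (Submodule.span_le.mpr (Set.range_subset_iff.mpr hxJ)) hJ⟩

/-- Let `A` be a pseudocompact `k`-algebra with `A/J²(A)` finite
dimensional over `k`.  Then `J(A)` is finitely generated as an `A`-module. -/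
theorem openJacobson_fg
    (k : Type) [Field k] [PerfectField k]
    (A : Type) [Ring A] [Algebra k A] [UniformSpace A] [IsUniformAddGroup A] [IsTopologicalRing A]
    (hA : IsPseudocompactAlgebra k A)
    (hfd : FiniteDimensional k (A ⧸ Jpow k A 2)) :
    (openJacobson A).FG :=
  openJacobson_fg_general k A hA hfd
end

section
/- Let A and B be pseudocompact k-algebras such that A/J²(A) and B/J²(B) are finite dimensional over k, and let α : A → B be a continuous surjective algebra homomorphism. Then α(Jⁿ(A)) = Jⁿ(B) for every natural number n ≥ 0. -/
/-! Preimages of open maximal left ideals under `α` are open maximal left ideals, so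
`α(J(A)) ⊆ J(B)`; once `α(J(A)) = J(B)`, the powers follow from `α(J·Jⁿ) = α(J)·α(Jⁿ)`.

For `J(B) ⊆ α(J(A))`: since `A/J(A)` is finite dimensional it is a semisimple `A`-module, so for
each open left ideal `V` of `B` the left ideal `J(A) + α⁻¹(V)` is an intersection of maximal left
ideals. Their images are open maximal left ideals of `B`, whence `J(B) ⊆ α(J(A)) + V` for all
`V`. Linear compactness of `A` (Zorn's lemma for filter bases of affine subspaces, plus
completeness) then makes `α(J(A))` closed. -/

open Filter Topology

section AffineFilterBasis

variable {k V : Type*} [AddCommGroup V]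

def IsAffineFilterBasis [Ring k] [Module k V] (F : Set (AffineSubspace k V)) : Prop :=
  F.Nonempty ∧ (∀ s ∈ F, (s : Set V).Nonempty) ∧ DirectedOn (· ≥ ·) F

namespace IsAffineFilterBasis

section Ring

variable [Ring k] [Module k V] {F : Set (AffineSubspace k V)}

theorem sUnion_of_isChain {C : Set (Set (AffineSubspace k V))}
    (hC : ∀ F ∈ C, IsAffineFilterBasis F) (hchain : IsChain (· ⊆ ·) C) (hne : C.Nonempty) :
    IsAffineFilterBasis (⋃₀ C) := by
  obtain ⟨F, hF⟩ := hne
  refine ⟨(hC F hF).1.mono (Set.subset_sUnion_of_mem hF), ?_,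
    Set.directedOn_sUnion hchain.directedOn fun F hF => (hC F hF).2.2⟩
  rintro s ⟨F, hF, hs⟩
  exact (hC F hF).2.1 s hs

theorem mem_biInf_principal (hF : IsAffineFilterBasis F) {t : Set V} :
    t ∈ ⨅ s ∈ F, 𝓟 (s : Set V) ↔ ∃ s ∈ F, (s : Set V) ⊆ t := by
  rw [mem_biInf_of_directed (hF.2.2.mono fun _ _ h => principal_mono.mpr h) hF.1]
  simp only [mem_principal]

theorem neBot_biInf_principal (hF : IsAffineFilterBasis F) :
    (⨅ s ∈ F, 𝓟 (s : Set V)).NeBot :=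
  forall_mem_nonempty_iff_neBot.mp fun _ ht =>
    let ⟨s, hs, hst⟩ := hF.mem_biInf_principal.mp ht
    (hF.2.1 s hs).mono hst

/-- Adjoining the intersections `s ⊓ c` keeps `F` an affine filter basis. -/
theorem exists_le_of_maximal (hM : Maximal IsAffineFilterBasis F) {c : AffineSubspace k V}
    (hc : ∀ s ∈ F, ((s ⊓ c : AffineSubspace k V) : Set V).Nonempty) : ∃ t ∈ F, t ≤ c := by
  obtain ⟨⟨s₀, hs₀⟩, hne, hdir⟩ := hM.prop
  have hbase : ∀ x ∈ F ∪ (· ⊓ c) '' F, ∃ u ∈ F, u ⊓ c ≤ x := by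
    rintro x (hx | ⟨u, hu, rfl⟩)
    exacts [⟨x, hx, inf_le_left⟩, ⟨u, hu, le_rfl⟩]
  have hF' : IsAffineFilterBasis (F ∪ (· ⊓ c) '' F) := by
    refine ⟨⟨s₀, Or.inl hs₀⟩, ?_, ?_⟩
    · rintro s (hs | ⟨s, hs, rfl⟩)
      exacts [hne s hs, hc s hs]
    · intro x hx y hy
      obtain ⟨u, hu, hux⟩ := hbase x hx
      obtain ⟨v, hv, hvy⟩ := hbase y hy
      obtain ⟨t, ht, htu, htv⟩ := hdir u hu v hv
      exact ⟨t ⊓ c, Or.inr ⟨t, ht, rfl⟩, (inf_le_inf_right c htu).trans hux,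
        (inf_le_inf_right c htv).trans hvy⟩
  exact ⟨s₀ ⊓ c, hM.2 hF' Set.subset_union_left (Or.inr ⟨s₀, hs₀, rfl⟩), inf_le_right⟩

end Ring

/-- Among the images of the members of `F` in the finite dimensional space `V ⧸ p`, one of
minimal dimension is contained in all the others; a point `g` over it gives a coset `g + p`
meeting every member of `F`. -/
theorem exists_forall_inf_mk'_nonempty [DivisionRing k] [Module k V]
    {F : Set (AffineSubspace k V)} (hF : IsAffineFilterBasis F) (p : Submodule k V)
    [FiniteDimensional k (V ⧸ p)] :
    ∃ g : V, ∀ s ∈ F, ((s ⊓ AffineSubspace.mk' g p : AffineSubspace k V) : Set V).Nonempty := by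
  obtain ⟨hFne, hne, hdir⟩ := hF
  let π : V →ᵃ[k] V ⧸ p := p.mkQ.toAffineMap
  let d : AffineSubspace k V → ℕ := fun s => Module.finrank k (s.map π).direction
  let s₀ := Function.argminOn d F hFne
  have hs₀ : s₀ ∈ F := Function.argminOn_mem d F hFne
  have hmin : ∀ s ∈ F, s₀.map π ≤ s.map π := by
    intro s hs
    obtain ⟨t, ht, hts₀, hts⟩ := hdir s₀ hs₀ s hs
    have hle : t.map π ≤ s₀.map π := AffineSubspace.map_mono π hts₀
    have heq : t.map π = s₀.map π :=
      AffineSubspace.eq_of_direction_eq_of_nonempty_of_le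
        (Submodule.eq_of_le_of_finrank_le (AffineSubspace.direction_le hle)
          (not_lt.mp (Function.not_lt_argminOn d F ht)))
        (by rw [AffineSubspace.coe_map]; exact (hne t ht).image π) hle
    exact heq ▸ AffineSubspace.map_mono π hts
  obtain ⟨g, hg⟩ := hne s₀ hs₀
  refine ⟨g, fun s hs => ?_⟩
  obtain ⟨a, ha, hag⟩ :=
    AffineSubspace.mem_map.mp (hmin s hs (AffineSubspace.mem_map.mpr ⟨g, hg, rfl⟩))
  refine ⟨a, ha, AffineSubspace.mem_mk'.mpr ?_⟩
  simpa [π, Submodule.Quotient.eq] using hag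

end IsAffineFilterBasis

end AffineFilterBasis

section LinearCompactness

variable {k V : Type*} [DivisionRing k] [AddCommGroup V] [Module k V]
  [UniformSpace V] [IsUniformAddGroup V]

theorem IsAffineFilterBasis.cauchy_of_maximal
    (hbasis : ∀ u ∈ 𝓝 (0 : V), ∃ p : Submodule k V, FiniteDimensional k (V ⧸ p) ∧ (p : Set V) ⊆ u)
    {F : Set (AffineSubspace k V)} (hM : Maximal IsAffineFilterBasis F) :
    Cauchy (⨅ s ∈ F, 𝓟 (s : Set V)) := by
  have hF := hM.prop
  refine (IsUniformAddGroup.cauchy_iff_tendsto _).mpr ⟨hF.neBot_biInf_principal, fun u hu => ?_⟩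
  obtain ⟨p, hp, hpu⟩ := hbasis u hu
  obtain ⟨g, hg⟩ := hF.exists_forall_inf_mk'_nonempty p
  obtain ⟨t, ht, htg⟩ := IsAffineFilterBasis.exists_le_of_maximal hM hg
  have htF : (t : Set V) ∈ ⨅ s ∈ F, 𝓟 (s : Set V) := hF.mem_biInf_principal.mpr ⟨t, ht, le_rfl⟩
  refine mem_map.mpr (mem_of_superset (prod_mem_prod htF htF) ?_)
  rintro ⟨a, b⟩ ⟨ha, hb⟩
  have hab := sub_mem (AffineSubspace.mem_mk'.mp (htg ha)) (AffineSubspace.mem_mk'.mp (htg hb))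
  exact hpu (by simpa using hab)

/-- Linear compactness. By Zorn's lemma `F` extends to a maximal affine filter basis, whose
filter is Cauchy; its limit lies in every closed member of `F`. -/
theorem IsAffineFilterBasis.nonempty_biInter [CompleteSpace V]
    (hbasis : ∀ u ∈ 𝓝 (0 : V), ∃ p : Submodule k V, FiniteDimensional k (V ⧸ p) ∧ (p : Set V) ⊆ u)
    {F : Set (AffineSubspace k V)} (hF : IsAffineFilterBasis F)
    (hclosed : ∀ s ∈ F, IsClosed (s : Set V)) : (⋂ s ∈ F, (s : Set V)).Nonempty := by
  obtain ⟨M, hFM, hM⟩ := zorn_subset_nonempty {F | IsAffineFilterBasis F}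
    (fun C hC hchain hne => ⟨⋃₀ C, sUnion_of_isChain hC hchain hne,
      fun _ => Set.subset_sUnion_of_mem⟩) F hF
  have := hM.prop.neBot_biInf_principal
  obtain ⟨x, hx⟩ := CompleteSpace.complete (cauchy_of_maximal hbasis hM)
  have hx' : Tendsto id (⨅ s ∈ M, 𝓟 (s : Set V)) (𝓝 x) := hx
  exact ⟨x, Set.mem_iInter₂.mpr fun s hs => (hclosed s hs).mem_of_tendsto hx'
    (hM.prop.mem_biInf_principal.mpr ⟨s, hFM hs, le_rfl⟩)⟩

variable {W : Type*} [AddCommGroup W] [Module k W] [TopologicalSpace W]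
  [IsTopologicalAddGroup W] [T1Space W]

/-- The image of a closed subspace of a linearly compact space under a continuous linear map is
closed: a common point of the affine subspaces `p ∩ f⁻¹(b + U i)` is a preimage of `b`. -/
theorem mem_map_of_forall_mem_map_sup [CompleteSpace V]
    (hbasis : ∀ u ∈ 𝓝 (0 : V), ∃ p : Submodule k V, FiniteDimensional k (V ⧸ p) ∧ (p : Set V) ⊆ u)
    (f : V →ₗ[k] W) (hf : Continuous f) {p : Submodule k V} (hp : IsClosed (p : Set V))
    {ι : Type*} [Nonempty ι] (U : ι → Submodule k W) (hUopen : ∀ i, IsOpen (U i : Set W))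
    (hUbasis : ∀ u ∈ 𝓝 (0 : W), ∃ i, (U i : Set W) ⊆ u)
    {b : W} (hb : ∀ i, b ∈ p.map f ⊔ U i) : b ∈ p.map f := by
  let S : ι → AffineSubspace k V := fun i =>
    (p : AffineSubspace k V) ⊓ (AffineSubspace.mk' b (U i)).comap f.toAffineMap
  have hS : ∀ i, (S i : Set V) = (p : Set V) ∩ (fun a => f a - b) ⁻¹' (U i) := by
    intro i
    ext a
    simp [S, AffineSubspace.mem_inf_iff, AffineSubspace.mem_comap, AffineSubspace.mem_mk']
  have hF : IsAffineFilterBasis (Set.range S) := by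
    refine ⟨Set.range_nonempty S, ?_, ?_⟩
    · rintro _ ⟨i, rfl⟩
      obtain ⟨_, ⟨a, ha, rfl⟩, u, hu, hau⟩ := Submodule.mem_sup.mp (hb i)
      refine ⟨a, (hS i).symm ▸ ⟨ha, ?_⟩⟩
      simpa [← hau] using neg_mem hu
    · rintro _ ⟨i, rfl⟩ _ ⟨j, rfl⟩
      obtain ⟨l, hl⟩ := hUbasis _ (inter_mem ((hUopen i).mem_nhds (U i).zero_mem)
        ((hUopen j).mem_nhds (U j).zero_mem))
      have hSl : ∀ m, (U l : Set W) ⊆ U m → S l ≤ S m := fun m hlm a ha => by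
        rw [← SetLike.mem_coe, hS] at ha ⊢
        exact ⟨ha.1, hlm ha.2⟩
      exact ⟨S l, ⟨l, rfl⟩, hSl i fun _ h => (hl h).1, hSl j fun _ h => (hl h).2⟩
  have hclosed : ∀ s ∈ Set.range S, IsClosed (s : Set V) := by
    rintro _ ⟨i, rfl⟩
    rw [hS i]
    exact hp.inter <| (AddSubgroup.isClosed_of_isOpen (U i).toAddSubgroup (hUopen i)).preimage
      (hf.sub continuous_const)
  obtain ⟨a, ha⟩ := hF.nonempty_biInter hbasis hclosed
  simp only [Set.biInter_range, Set.mem_iInter, hS] at ha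
  have hab : (f a - b) ⤳ 0 :=
    specializes_iff_pure.mpr fun u hu => let ⟨i, hi⟩ := hUbasis u hu; hi (ha i).2
  exact ⟨a, (ha (Classical.arbitrary ι)).1, sub_eq_zero.mp hab.eq⟩

end LinearCompactness

theorem Module.mem_of_forall_isCoatom_le {R M : Type*} [Ring R] [AddCommGroup M] [Module R M]
    {N : Submodule R M} (hN : Module.jacobson R (M ⧸ N) = ⊥) {x : M}
    (hx : ∀ m : Submodule R M, IsCoatom m → N ≤ m → x ∈ m) : x ∈ N := by
  rw [← Submodule.Quotient.mk_eq_zero, ← Submodule.mem_bot R, ← hN, Module.jacobson,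
    Submodule.mem_sInf]
  intro P hP
  refine hx (P.comap N.mkQ) ((Submodule.isCoatom_comap_iff N.mkQ_surjective).mpr hP) ?_
  intro y hy
  rw [Submodule.mem_comap, Submodule.mkQ_apply, (Submodule.Quotient.mk_eq_zero N).mpr hy]
  exact P.zero_mem

theorem Module.jacobson_quotient_sInf_eq_bot {R M : Type*} [Ring R] [AddCommGroup M]
    [Module R M] {S : Set (Submodule R M)} (hS : ∀ m ∈ S, IsCoatom m) :
    Module.jacobson R (M ⧸ sInf S) = ⊥ := by
  refine eq_bot_iff.mpr fun y hy => ?_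
  obtain ⟨x, rfl⟩ := (sInf S).mkQ_surjective y
  rw [Submodule.mem_bot, Submodule.mkQ_apply, Submodule.Quotient.mk_eq_zero, Submodule.mem_sInf]
  intro m hm
  have hker : LinearMap.ker (sInf S).mkQ ≤ m := by rw [Submodule.ker_mkQ]; exact sInf_le hm
  have hx := Submodule.mem_sInf.mp hy _
    (Submodule.isCoatom_map_of_ker_le (sInf S).mkQ_surjective hker (hS m hm))
  rwa [← Submodule.mem_comap, Submodule.comap_map_eq_self hker] at hx

section OpenJacobson

variable {A B : Type} [Ring A] [Ring B] [TopologicalSpace B]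

/-- A maximal left ideal `m` containing `f⁻¹(V)` is `f⁻¹(n)` for the maximal left ideal
`n = f(m)`, which contains `V` and is therefore open. -/
theorem comap_openJacobson_le [IsTopologicalAddGroup B] (f : A →+* B)
    (hsurj : Function.Surjective f) {V : Ideal B} (hV : IsOpen (V : Set B)) {m : Ideal A}
    (hm : IsCoatom m) (hVm : V.comap f ≤ m) : (openJacobson B).comap f ≤ m := by
  have : RingHomSurjective f := ⟨hsurj⟩
  have hker : LinearMap.ker f.toSemilinearMap ≤ m := fun x hx => by
    have hx0 : f x = 0 := hx
    exact hVm (by rw [Ideal.mem_comap, hx0]; exact V.zero_mem)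
  let n : Ideal B := Submodule.map f.toSemilinearMap m
  have hVn : V ≤ n := fun y hy => by
    obtain ⟨x, rfl⟩ := hsurj y
    exact Submodule.mem_map_of_mem (hVm hy)
  have hn : openJacobson B ≤ n := sInf_le
    ⟨AddSubgroup.isOpen_mono (H₁ := V.toAddSubgroup) (H₂ := n.toAddSubgroup) hVn hV,
      Ideal.isMaximal_def.mpr (Submodule.isCoatom_map_of_ker_le hsurj hker hm)⟩
  refine (Ideal.comap_mono hn).trans ?_
  exact (Submodule.comap_map_eq_self hker).le

variable [TopologicalSpace A]

theorem isClosed_openJacobson [IsTopologicalAddGroup A] : IsClosed (openJacobson A : Set A) := by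
  rw [openJacobson, Submodule.coe_sInf]
  exact isClosed_biInter fun I hI => AddSubgroup.isClosed_of_isOpen I.toAddSubgroup hI.1

theorem openJacobson_le_comap (f : A →+* B) (hf : Continuous f) (hsurj : Function.Surjective f) :
    openJacobson A ≤ (openJacobson B).comap f := fun x hx => by
  rw [Ideal.mem_comap, openJacobson, Submodule.mem_sInf]
  rintro n ⟨hn, hmax⟩
  exact Submodule.mem_sInf.mp hx (Ideal.comap f n)
    ⟨hn.preimage hf, Ideal.comap_isMaximal_of_surjective f hsurj⟩

variable {k : Type} [Field k] [Algebra k A]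

theorem isSemisimpleModule_quotient_openJacobson (hfd : FiniteDimensional k (A ⧸ Jrad k A)) :
    IsSemisimpleModule A (A ⧸ openJacobson A) := by
  have : FiniteDimensional k (A ⧸ (openJacobson A).restrictScalars k) := hfd
  have : FiniteDimensional k (A ⧸ openJacobson A) :=
    Module.Finite.equiv (Submodule.Quotient.restrictScalarsEquiv k (openJacobson A))
  have : IsArtinian A (A ⧸ openJacobson A) := isArtinian_of_tower k inferInstance
  exact (IsArtinian.isSemisimpleModule_iff_jacobson A _).mpr
    (Module.jacobson_quotient_sInf_eq_bot fun I hI => Ideal.isMaximal_def.mp hI.2)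

/-- Every maximal left ideal containing `J(A) + f⁻¹(V)` contains `f⁻¹(J(B))`, and the
semisimple module `A ⧸ (J(A) + f⁻¹(V))` has zero radical. -/
theorem mem_openJacobson_sup_comap [IsTopologicalAddGroup B]
    (hfd : FiniteDimensional k (A ⧸ Jrad k A)) (f : A →+* B) (hsurj : Function.Surjective f)
    {V : Ideal B} (hV : IsOpen (V : Set B)) {x : A} (hx : f x ∈ openJacobson B) :
    x ∈ openJacobson A ⊔ V.comap f := by
  have := isSemisimpleModule_quotient_openJacobson hfd
  have := IsSemisimpleModule.of_surjective _ (Submodule.factor_surjective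
    (le_sup_left : openJacobson A ≤ openJacobson A ⊔ V.comap f))
  exact Module.mem_of_forall_isCoatom_le (IsSemisimpleModule.jacobson_eq_bot A _)
    fun m hm hle => comap_openJacobson_le f hsurj hV hm (le_sup_right.trans hle) hx

end OpenJacobson

section Jpow

variable {k A B : Type} [Field k] [Ring A] [Algebra k A] [TopologicalSpace A]
  [Ring B] [Algebra k B] [TopologicalSpace B]

theorem Jpow_two_le_Jrad : Jpow k A 2 ≤ Jrad k A :=
  Submodule.mul_le.mpr fun a _ _ hb => Ideal.mul_mem_left _ a hb

theorem map_Jpow_of_map_Jrad (α : A →ₐ[k] B) (hsurj : Function.Surjective α)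
    (h : (Jrad k A).map α.toLinearMap = Jrad k B) :
    ∀ n, (Jpow k A n).map α.toLinearMap = Jpow k B n
  | 0 => by rw [Jpow, Jpow, Submodule.map_top, LinearMap.range_eq_top]; exact hsurj
  | 1 => h
  | n + 2 => by rw [Jpow, Jpow, Submodule.map_mul, h, map_Jpow_of_map_Jrad α hsurj h (n + 1)]

end Jpow

theorem IsPseudocompactAlgebra.map_Jrad {k A B : Type} [Field k]
    [Ring A] [Algebra k A] [UniformSpace A] [IsUniformAddGroup A] [IsTopologicalRing A]
    [Ring B] [Algebra k B] [UniformSpace B] [IsUniformAddGroup B] [IsTopologicalRing B]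
    (hA : IsPseudocompactAlgebra k A) (hB : IsPseudocompactAlgebra k B)
    (hfd : FiniteDimensional k (A ⧸ Jrad k A))
    (α : A →ₐ[k] B) (hcont : Continuous α) (hsurj : Function.Surjective α) :
    (Jrad k A).map α.toLinearMap = Jrad k B := by
  refine le_antisymm (Submodule.map_le_iff_le_comap.mpr fun x hx =>
    openJacobson_le_comap (α : A →+* B) hcont hsurj hx) fun b hb => ?_
  have := hA.complete
  have := hB.t2
  have hbasisA : ∀ u ∈ 𝓝 (0 : A), ∃ p : Submodule k A, FiniteDimensional k (A ⧸ p) ∧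
      (p : Set A) ⊆ u := fun u hu =>
    let ⟨I, _, _, hI, hIu⟩ := hA.basis u hu
    ⟨I.restrictScalars k, hI, hIu⟩
  have : Nonempty {V : Ideal B // IsOpen (V : Set B)} := ⟨⟨⊤, isOpen_univ⟩⟩
  refine mem_map_of_forall_mem_map_sup hbasisA α.toLinearMap hcont isClosed_openJacobson
    (fun V : {V : Ideal B // IsOpen (V : Set B)} => V.1.restrictScalars k) (fun V => V.2)
    (fun u hu => let ⟨I, _, hI, _, hIu⟩ := hB.basis u hu; ⟨⟨I, hI⟩, hIu⟩) fun V => ?_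
  obtain ⟨x, rfl⟩ := hsurj b
  obtain ⟨j, hj, w, hw, rfl⟩ :=
    Submodule.mem_sup.mp (mem_openJacobson_sup_comap hfd (α : A →+* B) hsurj V.2 hb)
  rw [map_add]
  exact Submodule.add_mem_sup (Submodule.mem_map_of_mem hj) hw

theorem image_Jpow_eq_Jpow_general
    (k : Type) [Field k]
    (A : Type) [Ring A] [Algebra k A] [UniformSpace A] [IsUniformAddGroup A] [IsTopologicalRing A]
    (B : Type) [Ring B] [Algebra k B] [UniformSpace B] [IsUniformAddGroup B] [IsTopologicalRing B]
    (hA : IsPseudocompactAlgebra k A) (hB : IsPseudocompactAlgebra k B)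
    (hAfd : FiniteDimensional k (A ⧸ Jpow k A 2))
    (α : A →ₐ[k] B) (hcont : Continuous α) (hsurj : Function.Surjective α) :
    ∀ n : ℕ, (⇑α) '' (Jpow k A n : Set A) = (Jpow k B n : Set B) := by
  have hfd : FiniteDimensional k (A ⧸ Jrad k A) :=
    Module.Finite.of_surjective _ (Submodule.factor_surjective Jpow_two_le_Jrad)
  intro n
  rw [← map_Jpow_of_map_Jrad α hsurj (hA.map_Jrad hB hfd α hcont hsurj) n, Submodule.map_coe]
  rfl

/-- Let `A`, `B` be pseudocompact `k`-algebras with `A/J²(A)` and `B/J²(B)`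
finite dimensional, and `α : A → B` a continuous surjective algebra homomorphism.  Then
`α(Jⁿ(A)) = Jⁿ(B)` for every `n ≥ 0`. -/
theorem image_Jpow_eq_Jpow
    (k : Type) [Field k] [PerfectField k]
    (A : Type) [Ring A] [Algebra k A] [UniformSpace A] [IsUniformAddGroup A] [IsTopologicalRing A]
    (B : Type) [Ring B] [Algebra k B] [UniformSpace B] [IsUniformAddGroup B] [IsTopologicalRing B]
    (hA : IsPseudocompactAlgebra k A) (hB : IsPseudocompactAlgebra k B)
    (hAfd : FiniteDimensional k (A ⧸ Jpow k A 2))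
    (hBfd : FiniteDimensional k (B ⧸ Jpow k B 2))
    (α : A →ₐ[k] B) (hcont : Continuous α) (hsurj : Function.Surjective α) :
    ∀ n : ℕ, (⇑α) '' (Jpow k A n : Set A) = (Jpow k B n : Set B) :=
  image_Jpow_eq_Jpow_general k A B hA hB hAfd α hcont hsurj
end

section
/- Let A and B be pointed pseudocompact k-algebras with A/J²(A) and B/J²(B) finite dimensional, and let α, β : A → B be continuous unital algebra homomorphisms satisfying (α−β)(A) ⊆ J(B) and (α−β)(J(A)) ⊆ J²(B). Then for every n ≥ 1, (α−β)(Jⁿ(A)) ⊆ J^{n+1}(B). -/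
/-! Continuity and pointedness force `α(J(A)) ⊆ J(B)`: for a presentation `B/J(B) ≅ kᵐ`, each
coordinate of `A → B → kᵐ` is a character of `A` whose kernel is a maximal ideal, open because
`J(B)` is open, being (by finite dimensionality of `B/J(B)`) a finite intersection of open ideals.
So `α` and `β` preserve every `Jⁿ`, and `α(xy) − β(xy) = (α x − β x) α y + β x (α y − β y)` sends
`Jⁿ⁺¹(A) = J(A)·Jⁿ(A)` into `J²(B)·Jⁿ(B) + J(B)·Jⁿ⁺¹(B) = Jⁿ⁺²(B)`. -/

theorem Submodule.exists_finset_inf_eq_sInf {R M : Type*} [Ring R] [AddCommGroup M] [Module R M]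
    (S : Set (Submodule R M)) [IsArtinian R (M ⧸ sInf S)] :
    ∃ s : Finset (Submodule R M), ↑s ⊆ S ∧ s.inf id = sInf S := by
  classical
  set N := sInf S
  obtain ⟨_, ⟨s, hsS, rfl⟩, hmin⟩ := IsArtinian.set_has_minimal
    ((fun s : Finset (Submodule R M) => (s.inf id).map N.mkQ) '' {s | ↑s ⊆ S})
    ⟨_, ∅, by simp, rfl⟩
  refine ⟨s, hsS, le_antisymm (le_sInf fun I hI => ?_)
    (Finset.le_inf fun I hI => sInf_le (hsS hI))⟩
  have hle : (insert I s).inf id ≤ s.inf id := Finset.inf_mono (Finset.subset_insert _ _)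
  have hIs : ↑(insert I s) ⊆ S := by
    rw [Finset.coe_insert]; exact Set.insert_subset hI hsS
  have hmap : ((insert I s).inf id).map N.mkQ = (s.inf id).map N.mkQ :=
    (Submodule.map_mono hle).eq_of_not_lt (hmin _ ⟨insert I s, hIs, rfl⟩)
  have hN : ∀ t : Finset (Submodule R M), ↑t ⊆ S → N ≤ t.inf id :=
    fun t ht => Finset.le_inf fun J hJ => sInf_le (ht hJ)
  have hcomap := congrArg (Submodule.comap N.mkQ) hmap
  rw [Submodule.comap_map_mkQ, Submodule.comap_map_mkQ, sup_of_le_right (hN _ hIs),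
    sup_of_le_right (hN _ hsS)] at hcomap
  exact hcomap ▸ Finset.inf_le (Finset.mem_insert_self I s)

theorem Submodule.map_sub_mul_le {R A B : Type*} [CommRing R] [Ring A] [Ring B] [Algebra R A]
    [Algebra R B] (α β : A →ₐ[R] B) (p q : Submodule R A) :
    (p * q).map (α.toLinearMap - β.toLinearMap) ≤
      p.map (α.toLinearMap - β.toLinearMap) * q.map α.toLinearMap ⊔
        p.map β.toLinearMap * q.map (α.toLinearMap - β.toLinearMap) := by
  rw [Submodule.map_le_iff_le_comap, Submodule.mul_le]
  intro x hx y hy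
  have hLeibniz : α (x * y) - β (x * y) = (α x - β x) * α y + β x * (α y - β y) := by
    rw [map_mul, map_mul]; noncomm_ring
  rw [Submodule.mem_comap, LinearMap.sub_apply, AlgHom.toLinearMap_apply,
    AlgHom.toLinearMap_apply, hLeibniz]
  exact Submodule.add_mem_sup
    (Submodule.mul_mem_mul (Submodule.mem_map_of_mem hx) (Submodule.mem_map_of_mem hy))
    (Submodule.mul_mem_mul (Submodule.mem_map_of_mem hx) (Submodule.mem_map_of_mem hy))

section Radical

variable {k : Type} [Field k] {A B : Type} [Ring A] [Algebra k A] [Ring B] [Algebra k B]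

theorem IsPointed.finiteDimensional_quotient_Jrad [TopologicalSpace B] (hB : IsPointed k B) :
    FiniteDimensional k (B ⧸ Jrad k B) := by
  obtain ⟨m, ψ, -, hker⟩ := hB
  have hJ : Jrad k B = LinearMap.ker ψ.toLinearMap := by
    ext x
    simp [Jrad, ← hker]
  rw [hJ]
  exact (LinearMap.quotKerEquivRange ψ.toLinearMap).symm.finiteDimensional

theorem isOpen_Jrad [TopologicalSpace B] [FiniteDimensional k (B ⧸ Jrad k B)] :
    IsOpen (Jrad k B : Set B) := by
  set S := Submodule.restrictScalars k '' {I : Ideal B | IsOpen (I : Set B) ∧ I.IsMaximal}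
  have hJ : Jrad k B = sInf S := Submodule.restrictScalars_sInf k _
  have : IsArtinian k (B ⧸ sInf S) := hJ ▸ inferInstance
  obtain ⟨s, hsS, hs⟩ := Submodule.exists_finset_inf_eq_sInf S
  rw [hJ, ← hs, Submodule.coe_finsetInf]
  refine isOpen_biInter_finset fun I hI => ?_
  obtain ⟨I, ⟨hopen, -⟩, rfl⟩ := hsS hI
  exact hopen

theorem openJacobson_le_ker [TopologicalSpace A] (χ : A →ₐ[k] k)
    (hχ : IsOpen (RingHom.ker χ : Set A)) : openJacobson A ≤ RingHom.ker χ :=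
  sInf_le ⟨hχ, RingHom.ker_isMaximal_of_surjective χ fun c => ⟨algebraMap k A c, by simp⟩⟩

theorem IsPointed.map_Jrad_le [TopologicalSpace A] [TopologicalSpace B] [ContinuousAdd B]
    (hB : IsPointed k B) (α : A →ₐ[k] B) (hα : Continuous α) :
    (Jrad k A).map α.toLinearMap ≤ Jrad k B := by
  have := hB.finiteDimensional_quotient_Jrad
  obtain ⟨m, ψ, -, hker⟩ := hB
  rw [Submodule.map_le_iff_le_comap]
  intro a ha
  change α a ∈ openJacobson B
  rw [← hker, RingHom.mem_ker]
  funext i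
  let ψi := (Pi.evalAlgHom k (fun _ => k) i).comp ψ
  have hψi : IsOpen (RingHom.ker ψi : Set B) := by
    refine AddSubgroup.isOpen_mono (H₁ := (Jrad k B).toAddSubgroup)
      (H₂ := (RingHom.ker ψi).toAddSubgroup) (fun b hb => ?_) (isOpen_Jrad (k := k))
    change b ∈ openJacobson B at hb
    rw [← hker, RingHom.mem_ker] at hb
    exact congrFun hb i
  exact openJacobson_le_ker (ψi.comp α) (hψi.preimage hα) ha

theorem Jpow_two_mul [TopologicalSpace B] (n : ℕ) :
    Jpow k B 2 * Jpow k B (n + 1) = Jpow k B (n + 3) :=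
  mul_assoc _ _ _

theorem map_Jpow_le [TopologicalSpace A] [TopologicalSpace B] (α : A →ₐ[k] B)
    (hα : (Jrad k A).map α.toLinearMap ≤ Jrad k B) :
    ∀ n, (Jpow k A n).map α.toLinearMap ≤ Jpow k B n
  | 0 => le_top
  | 1 => hα
  | n + 2 => by
    change (Jrad k A * Jpow k A (n + 1)).map α.toLinearMap ≤ Jrad k B * Jpow k B (n + 1)
    rw [Submodule.map_mul]
    exact mul_le_mul' hα (map_Jpow_le α hα (n + 1))

theorem map_sub_Jpow_le [TopologicalSpace A] [TopologicalSpace B] (α β : A →ₐ[k] B)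
    (hα : (Jrad k A).map α.toLinearMap ≤ Jrad k B)
    (hβ : (Jrad k A).map β.toLinearMap ≤ Jrad k B)
    (h1 : (Jrad k A).map (α.toLinearMap - β.toLinearMap) ≤ Jpow k B 2) :
    ∀ n, (Jpow k A (n + 1)).map (α.toLinearMap - β.toLinearMap) ≤ Jpow k B (n + 2)
  | 0 => h1
  | n + 1 => calc
      (Jrad k A * Jpow k A (n + 1)).map (α.toLinearMap - β.toLinearMap)
      _ ≤ (Jrad k A).map (α.toLinearMap - β.toLinearMap) *
            (Jpow k A (n + 1)).map α.toLinearMap ⊔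
          (Jrad k A).map β.toLinearMap *
            (Jpow k A (n + 1)).map (α.toLinearMap - β.toLinearMap) :=
        Submodule.map_sub_mul_le α β _ _
      _ ≤ Jpow k B 2 * Jpow k B (n + 1) ⊔ Jrad k B * Jpow k B (n + 2) :=
        sup_le_sup (mul_le_mul' h1 (map_Jpow_le α hα _))
          (mul_le_mul' hβ (map_sub_Jpow_le α β hα hβ h1 n))
      _ = Jpow k B (n + 3) := by rw [Jpow_two_mul]; exact sup_idem _

end Radical

theorem diff_maps_Jpow_into_Jpow_succ_general
    (k : Type) [Field k]
    (A : Type) [Ring A] [Algebra k A] [UniformSpace A]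
    (B : Type) [Ring B] [Algebra k B] [UniformSpace B] [IsTopologicalRing B]
    (hBp : IsPointed k B)
    (α β : A →ₐ[k] B) (hαc : Continuous α) (hβc : Continuous β)
    (h1 : ∀ a ∈ Jrad k A, α a - β a ∈ Jpow k B 2) :
    ∀ n : ℕ, 1 ≤ n → ∀ a ∈ Jpow k A n, α a - β a ∈ Jpow k B (n + 1) := by
  intro n hn a ha
  obtain ⟨m, rfl⟩ := Nat.exists_eq_add_of_le' hn
  exact map_sub_Jpow_le α β (hBp.map_Jrad_le α hαc) (hBp.map_Jrad_le β hβc)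
    (Submodule.map_le_iff_le_comap.mpr h1) m (Submodule.mem_map_of_mem ha)

/-- Let `A`, `B` be pointed pseudocompact `k`-algebras with `A/J²(A)`,
`B/J²(B)` finite dimensional, and let `α, β : A → B` be continuous unital algebra
homomorphisms with `(α−β)(A) ⊆ J(B)` and `(α−β)(J(A)) ⊆ J²(B)`.  Then for every `n ≥ 1`,
`(α−β)(Jⁿ(A)) ⊆ J^{n+1}(B)`. -/
theorem diff_maps_Jpow_into_Jpow_succ
    (k : Type) [Field k] [PerfectField k]
    (A : Type) [Ring A] [Algebra k A] [UniformSpace A] [IsUniformAddGroup A] [IsTopologicalRing A]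
    (B : Type) [Ring B] [Algebra k B] [UniformSpace B] [IsUniformAddGroup B] [IsTopologicalRing B]
    (hA : IsPseudocompactAlgebra k A) (hB : IsPseudocompactAlgebra k B)
    (hAp : IsPointed k A) (hBp : IsPointed k B)
    (hAfd : FiniteDimensional k (A ⧸ Jpow k A 2))
    (hBfd : FiniteDimensional k (B ⧸ Jpow k B 2))
    (α β : A →ₐ[k] B) (hαc : Continuous α) (hβc : Continuous β)
    (h0 : ∀ a : A, α a - β a ∈ Jrad k B)
    (h1 : ∀ a ∈ Jrad k A, α a - β a ∈ Jpow k B 2) :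
    ∀ n : ℕ, 1 ≤ n → ∀ a ∈ Jpow k A n, α a - β a ∈ Jpow k B (n + 1) :=
  diff_maps_Jpow_into_Jpow_succ_general k A B hBp α β hαc hβc h1
end
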